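/- Let G be a finite abelian group with free Brauer action on a Brauer graph (Γ, 𝔬, m), let W be the successor weighting on the orbit graph Γ̄ associated to this action, let μ be a vertex of Γ with successor sequence of an incident edge i of the form i = i₁,…,i_k, i₁^g,…,i_k^g, …, i₁^{g^s},…,i_k^{g^s}. Then: (1) g = ω_{μ̄}; (2) the order of ω_{μ̄} equals s+1; (3) ord(μ̄) divides m̄(μ̄); (4) for h, h' ∈ G, μ^h = μ^{h'} if and only if h(h')^{-1} ∈ ⟨ω_{μ̄}⟩; (5) the index of ⟨ω_{μ̄}⟩ in G equals the number of vertices in the G-orbit of μ. -/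

import Mathlib

/-!
Since `G` commutes with `σ`, `σ^(kn) h = g^n • h` for all `n`. The stabilizer of the vertex
`μ = v h` is exactly `⟨g⟩`: if `σ^n h = b • h`, write `n = qk + r` with `r < k`; then `σ^r h`
and `h` lie in one `G`-orbit, but the `k` half-edges `h, …, σ^(k-1) h` meet all `k = val(μ̄)`
orbit edges at `μ̄`, hence represent distinct ones, so `r = 0` and freeness gives `b = g^q`.
Following the weights along `h, σ h, …, σ^k h = g • h`, starting from the representative of the
orbit of `h`, gives `g = ω`. The fibre of `μ` is the `σ`-cycle of `h`, of length `k(s+1)`,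
whence `ord g = s + 1` and `m̄(μ̄) = (s+1) m(μ)`; (4) and (5) are orbit–stabilizer for the induced
action on vertices.
-/

/-- A Brauer graph `(Γ, 𝔬, m)`, presented via half-edges: `H` is the (finite, nonempty)
set of half-edges, `σ` is the successor permutation whose cycle at a vertex lists the
incident half-edges in the cyclic order `𝔬` (a loop contributes two half-edges, i.e. is
"listed twice"), `ι` is the fixed-point-free involution pairing the two half-edges of
each edge, `v` assigns to each half-edge its vertex (so the fibres of `v` are exactly
the cycles of `σ`), the graph is connected, and `m` is the multiplicity function. -/
structure BrauerGraph where
  H : Type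
  V : Type
  fintypeH : Fintype H
  decEqH : DecidableEq H
  fintypeV : Fintype V
  decEqV : DecidableEq V
  nonemptyH : Nonempty H
  σ : Equiv.Perm H
  ι : Equiv.Perm H
  ι_invol : ∀ h, ι (ι h) = h
  ι_ne : ∀ h, ι h ≠ h
  v : H → V
  v_surj : Function.Surjective v
  v_eq_iff : ∀ h h', v h = v h' ↔ ∃ n : ℤ, (σ ^ n) h = h'
  connected : ∀ h h' : H, ∃ g ∈ Subgroup.closure ({σ, ι} : Set (Equiv.Perm H)), g h = h'
  m : V → ℕ
  m_pos : ∀ μ, 0 < m μ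

attribute [instance] BrauerGraph.fintypeH BrauerGraph.decEqH
attribute [instance] BrauerGraph.fintypeV BrauerGraph.decEqV

namespace BrauerGraph

variable (Γ : BrauerGraph)

/-- The valency of a vertex: the number of incident half-edges (loops counted twice). -/
noncomputable def val (μ : Γ.V) : ℕ := Nat.card {h : Γ.H // Γ.v h = μ}

end BrauerGraph

/-- A Brauer action of a group `G` on a Brauer graph: a faithful action on half-edges
commuting with the successor permutation (i.e. orientation/successor preserving) and
with the edge involution (i.e. an action by graph automorphisms), and preserving the
multiplicity function. -/
structure BrauerAction (G : Type) [Group G] (Γ : BrauerGraph) where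
  e : G →* Equiv.Perm Γ.H
  faithful : Function.Injective e
  comm_σ : ∀ g h, e g (Γ.σ h) = Γ.σ (e g h)
  comm_ι : ∀ g h, e g (Γ.ι h) = Γ.ι (e g h)
  m_inv : ∀ g h, Γ.m (Γ.v (e g h)) = Γ.m (Γ.v h)

namespace BrauerAction

variable {G : Type} [Group G] {Γ : BrauerGraph}

/-- A free Brauer action: the action is free on the set of edges (loops counted twice,
i.e. on half-edges). -/
def IsFree (A : BrauerAction G Γ) : Prop := ∀ (g : G) (h : Γ.H), A.e g h = h → g = 1

/-- The orbit equivalence relation of the action on half-edges. -/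
def orbSetoid (A : BrauerAction G Γ) : Setoid Γ.H where
  r h h' := ∃ g : G, A.e g h = h'
  iseqv := by
    refine ⟨fun h => ⟨1, by simp⟩, ?_, ?_⟩
    · rintro h h' ⟨g, hg⟩
      exact ⟨g⁻¹, by rw [← hg, ← Equiv.Perm.mul_apply, ← map_mul]; simp⟩
    · rintro a b c ⟨g₁, hg₁⟩ ⟨g₂, hg₂⟩
      exact ⟨g₂ * g₁, by rw [map_mul, Equiv.Perm.mul_apply, hg₁, hg₂]⟩

/-- The orbit equivalence relation of the action restricted to a subset of half-edges. -/
def subOrbSetoid (A : BrauerAction G Γ) (P : Γ.H → Prop) : Setoid {h : Γ.H // P h} where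
  r p q := ∃ g : G, A.e g p.1 = q.1
  iseqv := by
    refine ⟨fun p => ⟨1, by simp⟩, ?_, ?_⟩
    · rintro p q ⟨g, hg⟩
      exact ⟨g⁻¹, by rw [← hg, ← Equiv.Perm.mul_apply, ← map_mul]; simp⟩
    · rintro a b c ⟨g₁, hg₁⟩ ⟨g₂, hg₂⟩
      exact ⟨g₂ * g₁, by rw [map_mul, Equiv.Perm.mul_apply, hg₁, hg₂]⟩

/-- The induced action of `g ∈ G` on vertices (defined via a chosen half-edge
in the fibre of the vertex). -/
noncomputable def vmap (A : BrauerAction G Γ) (g : G) (μ : Γ.V) : Γ.V :=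
  Γ.v (A.e g (Γ.v_surj μ).choose)

/-- The valency, in the orbit graph `Γ/G`, of the orbit vertex `μ̄` of `μ`: the number
of `G`-orbits of half-edges incident with a vertex in the orbit of `μ`. -/
noncomputable def orbVal (A : BrauerAction G Γ) (μ : Γ.V) : ℕ :=
  Nat.card (Quotient (A.subOrbSetoid (fun h => ∃ a : G, Γ.v (A.e a h) = μ)))

/-- The multiplicity function `m̄(μ̄) = val(μ)·m(μ)/val(μ̄)` of the orbit graph,
expressed on representatives. -/
noncomputable def mbar (A : BrauerAction G Γ) (μ : Γ.V) : ℕ :=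
  Γ.val μ * Γ.m μ / A.orbVal μ

end BrauerAction

namespace BrauerGraph

variable (Γ : BrauerGraph) {G : Type} [CommGroup G]

/-- `ω_μ`: the product of the values of a successor weighting `W` over all successor
pairs at the vertex `μ` (a successor pair `(i, σ i)` is identified with the half-edge
`i`). -/
noncomputable def omega (W : Γ.H → G) (μ : Γ.V) : G :=
  ∏ h ∈ Finset.univ.filter (fun h => Γ.v h = μ), W h

/-- `ω(i₁, i_{r+1})`: the product of the weights along the first `r` steps of the
successor sequence of the half-edge `h`. -/
noncomputable def wpath (W : Γ.H → G) (h : Γ.H) (r : ℕ) : G :=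
  ∏ t ∈ Finset.range r, W ((Γ.σ ^ t) h)

/-- The generating relation for the equivalence classes `[i, H_{μ,s}]` defining the
vertices of the Brauer covering graph `Δ_W`: a pair `(i, g)` (representing the pair of
`i` and the coset `H_{v i}·g`) is related to `(σ i, g·W(i))`, and to `(i, g·ω_{v i})`
(the latter identifies representatives of the same coset of `H_μ = ⟨ω_μ⟩`). -/
def covRel (W : Γ.H → G) : Γ.H × G → Γ.H × G → Prop := fun p q =>
  (q.1 = Γ.σ p.1 ∧ q.2 = p.2 * W p.1) ∨ (q.1 = p.1 ∧ q.2 = p.2 * Γ.omega W (Γ.v p.1))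

end BrauerGraph

open Function MulAction Subgroup

theorem Equiv.Perm.pow_apply_eq_pow_apply_of_commute {α : Type*} {p q : Equiv.Perm α}
    (hpq : Commute p q) {x : α} (hx : p x = q x) (n : ℕ) : (p ^ n) x = (q ^ n) x := by
  induction n with
  | zero => rfl
  | succ n ih =>
    rw [pow_succ, Equiv.Perm.mul_apply, hx, ← Equiv.Perm.mul_apply, (hpq.pow_left n).eq,
      Equiv.Perm.mul_apply, ih, ← Equiv.Perm.mul_apply, ← pow_succ']

namespace BrauerGraph

variable (Γ : BrauerGraph)

theorem v_pow_apply (n : ℕ) (x : Γ.H) : Γ.v ((Γ.σ ^ n) x) = Γ.v x :=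
  (Γ.v_eq_iff _ _).2 (Equiv.Perm.sameCycle_pow_left.2 (Equiv.Perm.SameCycle.refl _ _))

theorem exists_pow_apply_eq_of_v_eq {x y : Γ.H} (hxy : Γ.v x = Γ.v y) :
    ∃ n : ℕ, (Γ.σ ^ n) x = y :=
  Equiv.Perm.SameCycle.exists_nat_pow_eq ((Γ.v_eq_iff x y).1 hxy)

theorem val_v_eq_minimalPeriod (x : Γ.H) : Γ.val (Γ.v x) = minimalPeriod Γ.σ x := by
  classical
  have hfibre : {y // Γ.v y = Γ.v x} ≃ orbit (zpowers Γ.σ) x :=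
    Equiv.subtypeEquivRight fun y => by
      rw [eq_comm, Γ.v_eq_iff, mem_orbit_iff, Subgroup.exists_zpowers]
      rfl
  rw [val, Nat.card_congr hfibre, Nat.card_eq_fintype_card, ← minimalPeriod_eq_card]
  rfl

end BrauerGraph

namespace BrauerAction

section Group

variable {G : Type} [Group G] {Γ : BrauerGraph} (A : BrauerAction G Γ)

theorem commute_σ (a : G) : Commute (A.e a) Γ.σ :=
  Equiv.ext fun x => A.comm_σ a x

theorem e_pow_σ_apply (a : G) (n : ℕ) (x : Γ.H) :
    A.e a ((Γ.σ ^ n) x) = (Γ.σ ^ n) (A.e a x) := by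
  rw [← Equiv.Perm.mul_apply, ((A.commute_σ a).pow_right n).eq, Equiv.Perm.mul_apply]

theorem v_e_apply_eq_of_v_eq (a : G) {x y : Γ.H} (hxy : Γ.v x = Γ.v y) :
    Γ.v (A.e a x) = Γ.v (A.e a y) := by
  obtain ⟨n, rfl⟩ := Γ.exists_pow_apply_eq_of_v_eq hxy
  rw [e_pow_σ_apply, Γ.v_pow_apply]

theorem vmap_v (a : G) (x : Γ.H) : A.vmap a (Γ.v x) = Γ.v (A.e a x) :=
  A.v_e_apply_eq_of_v_eq a (Γ.v_surj (Γ.v x)).choose_spec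

noncomputable abbrev vertexAction : MulAction G Γ.V where
  smul := A.vmap
  one_smul μ := by
    obtain ⟨x, rfl⟩ := Γ.v_surj μ
    change A.vmap 1 (Γ.v x) = Γ.v x
    rw [vmap_v, map_one, Equiv.Perm.one_apply]
  mul_smul a b μ := by
    obtain ⟨x, rfl⟩ := Γ.v_surj μ
    change A.vmap (a * b) (Γ.v x) = A.vmap a (A.vmap b (Γ.v x))
    rw [vmap_v, vmap_v, vmap_v, map_mul, Equiv.Perm.mul_apply]

noncomputable def vertexStabilizer (μ : Γ.V) : Subgroup G :=
  let := A.vertexAction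
  stabilizer G μ

theorem mem_vertexStabilizer_v_iff {b : G} {x : Γ.H} :
    b ∈ A.vertexStabilizer (Γ.v x) ↔ Γ.v (A.e b x) = Γ.v x := by
  rw [← A.vmap_v]
  rfl

theorem vmap_eq_vmap_iff {a a' : G} {μ : Γ.V} :
    A.vmap a μ = A.vmap a' μ ↔ a⁻¹ * a' ∈ A.vertexStabilizer μ := by
  let := A.vertexAction
  change a • μ = a' • μ ↔ (a⁻¹ * a') • μ = μ
  rw [mul_smul, inv_smul_eq_iff, eq_comm]

theorem index_vertexStabilizer (μ : Γ.V) :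
    (A.vertexStabilizer μ).index = Nat.card {ν : Γ.V // ∃ a : G, A.vmap a μ = ν} := by
  let := A.vertexAction
  exact (index_stabilizer G μ).trans (Nat.card_coe_set_eq _).symm

theorem mbar_eq {μ : Γ.V} {k n : ℕ} (hk : 0 < k) (hkOrb : A.orbVal μ = k)
    (hval : Γ.val μ = k * n) : A.mbar μ = n * Γ.m μ := by
  rw [mbar, hval, hkOrb, mul_assoc, Nat.mul_div_cancel_left _ hk]

variable {A}

theorem IsFree.eq_of_apply_eq (hfree : A.IsFree) {a b : G} {x : Γ.H}
    (hab : A.e a x = A.e b x) : a = b := by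
  refine (inv_mul_eq_one.1 (hfree (b⁻¹ * a) x ?_)).symm
  rw [map_mul, Equiv.Perm.mul_apply, hab, ← Equiv.Perm.mul_apply, ← map_mul, inv_mul_cancel,
    map_one, Equiv.Perm.one_apply]

variable {h : Γ.H} {k : ℕ} {g : G}

theorem pow_mul_apply_of_pow_apply (hseq : (Γ.σ ^ k) h = A.e g h) (n : ℕ) :
    (Γ.σ ^ (k * n)) h = A.e (g ^ n) h := by
  rw [pow_mul, map_pow]
  exact Equiv.Perm.pow_apply_eq_pow_apply_of_commute ((A.commute_σ g).pow_right k).symm hseq n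

theorem pow_apply_eq_e_pow_div_mod (hseq : (Γ.σ ^ k) h = A.e g h) (n : ℕ) :
    (Γ.σ ^ n) h = A.e (g ^ (n / k)) ((Γ.σ ^ (n % k)) h) := by
  conv_lhs => rw [← Nat.mod_add_div n k, pow_add, Equiv.Perm.mul_apply,
    pow_mul_apply_of_pow_apply hseq]
  exact (A.e_pow_σ_apply _ _ _).symm

theorem IsFree.orderOf_eq (hfree : A.IsFree) (hseq : (Γ.σ ^ k) h = A.e g h) (hk : 0 < k)
    {n : ℕ} (hP : minimalPeriod Γ.σ h = k * n) : orderOf g = n := by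
  have hperiodic : ∀ j, IsPeriodicPt Γ.σ (k * j) h ↔ g ^ j = 1 := fun j => by
    rw [IsPeriodicPt, IsFixedPt, Equiv.Perm.iterate_eq_pow, pow_mul_apply_of_pow_apply hseq]
    exact ⟨hfree _ _, fun hj => by rw [hj, map_one, Equiv.Perm.one_apply]⟩
  refine Nat.dvd_antisymm (orderOf_dvd_of_pow_eq_one ?_) ?_
  · exact (hperiodic n).1 (hP ▸ isPeriodicPt_minimalPeriod _ _)
  · exact (Nat.mul_dvd_mul_iff_left hk).1
      (hP ▸ ((hperiodic _).2 (pow_orderOf_eq_one g)).minimalPeriod_dvd)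

variable (A h) in
/-- `σ^t h` as an edge of the orbit graph `Γ/G` at the orbit vertex of `h`; `orbVal` counts
these edges. -/
noncomputable def orbClass (t : ℕ) :
    Quotient (A.subOrbSetoid fun x => ∃ a : G, Γ.v (A.e a x) = Γ.v h) :=
  Quotient.mk _ ⟨(Γ.σ ^ t) h, 1, by rw [map_one, Equiv.Perm.one_apply, Γ.v_pow_apply]⟩

theorem orbClass_surjective : Surjective (A.orbClass h) := by
  rintro ⟨x, a, hx⟩
  obtain ⟨n, hn⟩ := Γ.exists_pow_apply_eq_of_v_eq hx.symm
  refine ⟨n, Quotient.sound ⟨a⁻¹, ?_⟩⟩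
  change A.e a⁻¹ ((Γ.σ ^ n) h) = x
  rw [hn, ← Equiv.Perm.mul_apply, ← map_mul, inv_mul_cancel, map_one, Equiv.Perm.one_apply]

theorem orbClass_mod (hseq : (Γ.σ ^ k) h = A.e g h) (t : ℕ) :
    A.orbClass h (t % k) = A.orbClass h t :=
  Quotient.sound ⟨g ^ (t / k), (pow_apply_eq_e_pow_div_mod hseq t).symm⟩

theorem orbClass_injOn (hseq : (Γ.σ ^ k) h = A.e g h) (hk : 0 < k)
    (hkOrb : A.orbVal (Γ.v h) = k) : Set.InjOn (A.orbClass h) (Set.Iio k) := by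
  have hsurj : Surjective fun t : Fin k => A.orbClass h t := fun q => by
    obtain ⟨n, rfl⟩ := orbClass_surjective q
    exact ⟨⟨n % k, Nat.mod_lt n hk⟩, orbClass_mod hseq n⟩
  have hbij := hsurj.bijective_of_nat_card_le (by rw [Nat.card_fin]; exact hkOrb.ge)
  intro t ht t' ht' htt'
  exact congrArg Fin.val (hbij.1 (a₁ := ⟨t, ht⟩) (a₂ := ⟨t', ht'⟩) htt')

theorem stabilizer_eq_zpowers (hfree : A.IsFree) (hseq : (Γ.σ ^ k) h = A.e g h) (hk : 0 < k)
    (hkOrb : A.orbVal (Γ.v h) = k) : A.vertexStabilizer (Γ.v h) = zpowers g := by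
  refine le_antisymm (fun b hb => ?_) (zpowers_le.2 ?_)
  · obtain ⟨n, hn⟩ := Γ.exists_pow_apply_eq_of_v_eq (A.mem_vertexStabilizer_v_iff.1 hb).symm
    rw [pow_apply_eq_e_pow_div_mod hseq] at hn
    have hclass : A.orbClass h 0 = A.orbClass h (n % k) :=
      Quotient.sound ⟨(g ^ (n / k))⁻¹ * b, by
        change A.e _ ((Γ.σ ^ 0) h) = _
        rw [pow_zero, Equiv.Perm.one_apply, map_mul, Equiv.Perm.mul_apply, ← hn,
          ← Equiv.Perm.mul_apply, ← map_mul, inv_mul_cancel, map_one, Equiv.Perm.one_apply]⟩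
    have hmod : n % k = 0 := (orbClass_injOn hseq hk hkOrb hk (Nat.mod_lt n hk) hclass).symm
    rw [hmod, pow_zero, Equiv.Perm.one_apply] at hn
    exact hfree.eq_of_apply_eq hn ▸ npow_mem_zpowers g _
  · rw [A.mem_vertexStabilizer_v_iff, ← hseq, Γ.v_pow_apply]

end Group

section CommGroup

variable {G : Type} [CommGroup G] {Γ : BrauerGraph} {A : BrauerAction G Γ}
  {rep : Quotient A.orbSetoid → Γ.H} {W : Quotient A.orbSetoid → G}

theorem e_prod_weight_apply_rep
    (hWdef : ∀ q, A.e (W q) (rep (Quotient.mk A.orbSetoid (Γ.σ (rep q)))) = Γ.σ (rep q))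
    {h : Γ.H} {c : G} (hc : A.e c (rep (Quotient.mk A.orbSetoid h)) = h) (t : ℕ) :
    A.e (c * ∏ j ∈ Finset.range t, W (Quotient.mk A.orbSetoid ((Γ.σ ^ j) h)))
      (rep (Quotient.mk A.orbSetoid ((Γ.σ ^ t) h))) = (Γ.σ ^ t) h := by
  induction t with
  | zero => simpa using hc
  | succ t ih =>
    set q := Quotient.mk A.orbSetoid ((Γ.σ ^ t) h)
    have hsucc : Quotient.mk A.orbSetoid (Γ.σ (rep q)) =
        Quotient.mk A.orbSetoid ((Γ.σ ^ (t + 1)) h) :=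
      Quotient.sound ⟨_, by rw [A.comm_σ, ih, pow_succ', Equiv.Perm.mul_apply]⟩
    rw [Finset.prod_range_succ, ← mul_assoc, map_mul, Equiv.Perm.mul_apply, ← hsucc, hWdef,
      A.comm_σ, ih, pow_succ', Equiv.Perm.mul_apply]

theorem IsFree.eq_prod_weight (hfree : A.IsFree)
    (hrep : ∀ q, Quotient.mk A.orbSetoid (rep q) = q)
    (hWdef : ∀ q, A.e (W q) (rep (Quotient.mk A.orbSetoid (Γ.σ (rep q)))) = Γ.σ (rep q))
    {h : Γ.H} {k : ℕ} {g : G} (hseq : (Γ.σ ^ k) h = A.e g h) :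
    g = ∏ t ∈ Finset.range k, W (Quotient.mk A.orbSetoid ((Γ.σ ^ t) h)) := by
  obtain ⟨c, hc⟩ := Quotient.exact (hrep (Quotient.mk A.orbSetoid h))
  have hclass : Quotient.mk A.orbSetoid ((Γ.σ ^ k) h) = Quotient.mk A.orbSetoid h :=
    Quotient.sound ⟨g⁻¹, by
      rw [hseq, ← Equiv.Perm.mul_apply, ← map_mul, inv_mul_cancel, map_one,
        Equiv.Perm.one_apply]⟩
  have hround := e_prod_weight_apply_rep hWdef hc k
  rw [hclass, hseq, ← hc, ← Equiv.Perm.mul_apply, ← map_mul, hc] at hround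
  exact mul_left_cancel ((hfree.eq_of_apply_eq hround).trans (mul_comm _ _)).symm

end CommGroup

end BrauerAction

theorem associated_weighting_properties_general {G : Type} [CommGroup G]
    (Γ : BrauerGraph) (A : BrauerAction G Γ) (hfree : A.IsFree)
    (rep : Quotient A.orbSetoid → Γ.H)
    (hrep : ∀ q, Quotient.mk A.orbSetoid (rep q) = q)
    (W : Quotient A.orbSetoid → G)
    (hWdef : ∀ q, A.e (W q) (rep (Quotient.mk A.orbSetoid (Γ.σ (rep q)))) = Γ.σ (rep q))
    (h : Γ.H) (k s : ℕ) (g : G)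
    (hkOrb : A.orbVal (Γ.v h) = k)
    (hseq : (Γ.σ ^ k) h = A.e g h)
    (hval : Γ.val (Γ.v h) = k * (s + 1)) :
    ∀ ω : G, ω = ∏ t ∈ Finset.range k, W (Quotient.mk A.orbSetoid ((Γ.σ ^ t) h)) →
      g = ω ∧
      orderOf ω = s + 1 ∧
      orderOf ω ∣ A.mbar (Γ.v h) ∧
      (∀ a a' : G, A.vmap a (Γ.v h) = A.vmap a' (Γ.v h) ↔ a * a'⁻¹ ∈ Subgroup.zpowers ω) ∧
      (Subgroup.zpowers ω).index = Nat.card {ν : Γ.V // ∃ a : G, A.vmap a (Γ.v h) = ν} := by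
  intro ω hω
  have hgω : g = ω := hω ▸ hfree.eq_prod_weight hrep hWdef hseq
  subst hgω
  have hP : minimalPeriod Γ.σ h = k * (s + 1) := by rw [← Γ.val_v_eq_minimalPeriod, hval]
  have hk : 0 < k := Nat.pos_of_mul_pos_right
    (hP ▸ minimalPeriod_pos_of_mem_periodicPts (Γ.σ.injective.mem_periodicPts h))
  have hord := hfree.orderOf_eq hseq hk hP
  have hstab := BrauerAction.stabilizer_eq_zpowers hfree hseq hk hkOrb
  refine ⟨rfl, hord, ?_, fun a a' => ?_, ?_⟩
  · rw [hord, A.mbar_eq hk hkOrb hval]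
    exact dvd_mul_right _ _
  · rw [A.vmap_eq_vmap_iff, hstab, ← inv_mem_iff, mul_inv_rev, inv_inv, mul_comm]
  · rw [← hstab, A.index_vertexStabilizer]

/-- Let `G` be a finite abelian group with a free Brauer action on a
Brauer graph `(Γ, 𝔬, m)` and let `W` be the successor weighting on the orbit graph
`Γ̄` associated to the action (defined, via a choice `rep` of orbit representatives,
by `A.e (W q) (rep(successor-orbit)) = σ (rep q)`).  If the vertex `μ = v h` has
successor sequence of the form `h,…,σ^{k-1}h, h^g,…, h^{g^s},…,(σ^{k-1}h)^{g^s}`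
(i.e. `k = val(μ̄)`, `σ^k h = h^g`, `val(μ) = k(s+1)`), then, with
`ω_{μ̄} = W(h̄₁)···W(h̄_k)`: (1) `g = ω_{μ̄}`; (2) `ord(ω_{μ̄}) = s+1`;
(3) `ord(μ̄) ∣ m̄(μ̄)`; (4) `μ^a = μ^{a'}` iff `a·a'⁻¹ ∈ ⟨ω_{μ̄}⟩`; (5) the index of
`⟨ω_{μ̄}⟩` in `G` equals the number of vertices in the orbit of `μ`. -/
theorem associated_weighting_properties {G : Type} [CommGroup G] [Fintype G]
    (Γ : BrauerGraph) (A : BrauerAction G Γ) (hfree : A.IsFree)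
    (rep : Quotient A.orbSetoid → Γ.H)
    (hrep : ∀ q, Quotient.mk A.orbSetoid (rep q) = q)
    (W : Quotient A.orbSetoid → G)
    (hWdef : ∀ q, A.e (W q) (rep (Quotient.mk A.orbSetoid (Γ.σ (rep q)))) = Γ.σ (rep q))
    (h : Γ.H) (k s : ℕ) (g : G)
    (hk1 : 1 ≤ k) (hkOrb : A.orbVal (Γ.v h) = k)
    (hseq : (Γ.σ ^ k) h = A.e g h)
    (hval : Γ.val (Γ.v h) = k * (s + 1)) :
    ∀ ω : G, ω = ∏ t ∈ Finset.range k, W (Quotient.mk A.orbSetoid ((Γ.σ ^ t) h)) →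
      g = ω ∧
      orderOf ω = s + 1 ∧
      orderOf ω ∣ A.mbar (Γ.v h) ∧
      (∀ a a' : G, A.vmap a (Γ.v h) = A.vmap a' (Γ.v h) ↔ a * a'⁻¹ ∈ Subgroup.zpowers ω) ∧
      (Subgroup.zpowers ω).index = Nat.card {ν : Γ.V // ∃ a : G, A.vmap a (Γ.v h) = ν} :=
  associated_weighting_properties_general Γ A hfree rep hrep W hWdef h k s g hkOrb hseq hval
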